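/- For the resonant trapping-state reservoir on the (4n̄+4)-dimensional truncation: for every density matrix ρ₀ ∈ Matrix (Fin (4n̄+4)) (Fin (4n̄+4)) ℂ supported above the trap, i.e. with ρ₀(a,b) = 0 unless n̄+1 ≤ a ≤ 4n̄+3 and n̄+1 ≤ b ≤ 4n̄+3, the iterates ρ_k = Φ_r^[k](ρ₀) converge entrywise, as k → ∞, to the projector |4n̄+3⟩⟨4n̄+3|. -/

import Mathlib

open Matrix
open scoped ComplexOrder

noncomputable section

/-- α(n) = π·√((n+1)/(n̄+1)) -/
def alphaAng (nbar n : ℕ) : ℝ := Real.pi * Real.sqrt (((n : ℝ) + 1) / ((nbar : ℝ) + 1))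

/-- Kraus operator M_g^r of the resonant trapping-state reservoir on dimension D. -/
def Mgr (nbar D : ℕ) : Matrix (Fin D) (Fin D) ℂ :=
  fun i j => if (i : ℕ) = (j : ℕ) + 1
    then Complex.ofReal (Real.sin (alphaAng nbar (j : ℕ)))
    else 0

/-- Kraus operator M_e^r of the resonant trapping-state reservoir on dimension D. -/
def Mer (nbar D : ℕ) : Matrix (Fin D) (Fin D) ℂ :=
  fun i j => if i = j then Complex.ofReal (Real.cos (alphaAng nbar (j : ℕ))) else 0

/-- Kraus map of the resonant trapping-state reservoir on dimension D. -/
def PhirK (nbar D : ℕ) (ρ : Matrix (Fin D) (Fin D) ℂ) : Matrix (Fin D) (Fin D) ℂ :=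
  Mgr nbar D * ρ * (Mgr nbar D)ᴴ + Mer nbar D * ρ * (Mer nbar D)ᴴ

/-! The diagonal of `ρ` evolves as a pure-birth chain: level `n` keeps the fraction `cos² α(n)` of
its population and passes `sin² α(n)` to level `n + 1`. Population only moves upward, so the levels
`≤ n̄`, empty at the start, stay empty. For `n̄ < n < 4n̄ + 3` one has `π < α(n) < 2π`, hence
`cos² α(n) < 1`, and by induction on `n` the population of level `n` tends to `0`. Since the map
preserves the trace (Kraus completeness uses `sin α(4n̄ + 3) = 0`), all weight ends up on the top
level, and the bound `|ρ a b|² ≤ ρ a a * ρ b b` for positive semidefinite `ρ` kills the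
off-diagonal entries. -/

open Filter Topology

theorem tendsto_zero_of_le_mul_add {r : ℝ} (hr₀ : 0 ≤ r) (hr₁ : r < 1) {x u : ℕ → ℝ}
    (hx : ∀ k, 0 ≤ x k) (hrec : ∀ k, x (k + 1) ≤ r * x k + u k)
    (hu : Tendsto u atTop (𝓝 0)) : Tendsto x atTop (𝓝 0) := by
  refine tendsto_order.2 ⟨fun c hc => .of_forall fun k => hc.trans_le (hx k), fun ε hε => ?_⟩
  obtain ⟨N, hN⟩ := eventually_atTop.1 <|
    hu.eventually (gt_mem_nhds (show 0 < ε / 2 * (1 - r) by nlinarith))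
  -- once `u < (1 - r) ε / 2`, the excess of `x` over `ε / 2` contracts by the factor `r`
  have hgeom : ∀ m, x (N + m) - ε / 2 ≤ r ^ m * (x N - ε / 2) := by
    intro m
    induction m with
    | zero => simp
    | succ m ih =>
      have hstep : x (N + m + 1) - ε / 2 ≤ r * (x (N + m) - ε / 2) := by
        nlinarith [hrec (N + m), hN (N + m) (Nat.le_add_right N m)]
      calc x (N + (m + 1)) - ε / 2 ≤ r * (x (N + m) - ε / 2) := hstep
        _ ≤ r * (r ^ m * (x N - ε / 2)) := mul_le_mul_of_nonneg_left ih hr₀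
        _ = r ^ (m + 1) * (x N - ε / 2) := by ring
  have hpow : Tendsto (fun m => r ^ m * (x N - ε / 2)) atTop (𝓝 0) := by
    simpa using (tendsto_pow_atTop_nhds_zero_of_lt_one hr₀ hr₁).mul_const (x N - ε / 2)
  obtain ⟨M, hM⟩ := eventually_atTop.1 <| hpow.eventually (gt_mem_nhds (half_pos hε))
  refine eventually_atTop.2 ⟨N + M, fun k hk => ?_⟩
  obtain ⟨m, rfl⟩ := Nat.exists_eq_add_of_le (le_of_add_le_left hk)
  linarith [hgeom m, hM m (by omega)]

namespace Matrix

theorem PosSemidef.norm_apply_sq_le {𝕜 n : Type*} [RCLike 𝕜] [Fintype n]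
    {M : Matrix n n 𝕜} (hM : M.PosSemidef) (a b : n) :
    ‖M a b‖ ^ 2 ≤ ‖M a a‖ * ‖M b b‖ := by
  have hdet := (hM.submatrix ![a, b]).det_nonneg
  rw [det_fin_two, sub_nonneg] at hdet
  simp only [submatrix_apply, cons_val_zero, cons_val_one] at hdet
  rw [← hM.1.apply a b, RCLike.star_def, RCLike.conj_mul,
    ← RCLike.norm_of_nonneg' (hM.diag_nonneg (i := a)),
    ← RCLike.norm_of_nonneg' (hM.diag_nonneg (i := b))] at hdet
  rw [← hM.1.apply a b, norm_star]
  exact_mod_cast hdet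

theorem trace_mul_mul_conjTranspose_add {R n : Type*} [CommSemiring R] [StarRing R] [Fintype n]
    [DecidableEq n] {A B : Matrix n n R} (h : Aᴴ * A + Bᴴ * B = 1) (ρ : Matrix n n R) :
    (A * ρ * Aᴴ + B * ρ * Bᴴ).trace = ρ.trace := by
  rw [trace_add, trace_mul_cycle A, trace_mul_cycle B, ← trace_add, ← add_mul, h, one_mul]

theorem tendsto_single_of_tendsto_apply_self {𝕜 n : Type*} [RCLike 𝕜] [Fintype n]
    [DecidableEq n] {ρ : ℕ → Matrix n n 𝕜} (hpsd : ∀ k, (ρ k).PosSemidef)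
    (htr : ∀ k, (ρ k).trace = 1) (t : n)
    (hdiag : ∀ a ≠ t, Tendsto (fun k => ρ k a a) atTop (𝓝 0)) (a b : n) :
    Tendsto (fun k => ρ k a b) atTop (𝓝 (single t t 1 a b)) := by
  have htt : Tendsto (fun k => ρ k t t) atTop (𝓝 1) := by
    have hsum : Tendsto (fun k => ∑ a ∈ Finset.univ.erase t, ρ k a a) atTop (𝓝 0) := by
      simpa only [Finset.sum_const_zero] using
        tendsto_finsetSum _ fun a ha => hdiag a (Finset.ne_of_mem_erase ha)
    have h := (tendsto_const_nhds (x := (1 : 𝕜))).sub hsum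
    rw [sub_zero] at h
    refine h.congr fun k => ?_
    rw [← htr k, trace, ← Finset.add_sum_erase _ _ (Finset.mem_univ t)]
    exact add_sub_cancel_right _ _
  have hdiag' (a : n) : Tendsto (fun k => ρ k a a) atTop (𝓝 (single t t (1 : 𝕜) a a)) := by
    by_cases ha : a = t
    · subst ha; simpa using htt
    · simpa [single_apply, Ne.symm ha] using hdiag a ha
  by_cases hab : a = t ∧ b = t
  · obtain ⟨rfl, rfl⟩ := hab
    exact hdiag' _
  have hzero : single t t (1 : 𝕜) a b = 0 := by
    simp only [single_apply, ite_eq_right_iff, and_imp]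
    exact fun ha hb => absurd ⟨ha.symm, hb.symm⟩ hab
  have hprod : Tendsto (fun k => ‖ρ k a a‖ * ‖ρ k b b‖) atTop (𝓝 0) := by
    convert (hdiag' a).norm.mul (hdiag' b).norm using 2
    rcases not_and_or.1 hab with ha | hb
    · simp [single_apply, Ne.symm ha]
    · simp [single_apply, Ne.symm hb]
  rw [hzero, tendsto_zero_iff_norm_tendsto_zero]
  refine squeeze_zero (fun k => norm_nonneg _)
    (fun k => Real.le_sqrt_of_sq_le ((hpsd k).norm_apply_sq_le a b)) ?_
  simpa only [Function.comp_def, Real.sqrt_zero] using (Real.continuous_sqrt.tendsto 0).comp hprod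

end Matrix

section Reservoir

open Real Set

variable (nbar : ℕ)

theorem alphaAng_strictMono : StrictMono (alphaAng nbar) := by
  intro m n hmn
  unfold alphaAng
  gcongr

theorem alphaAng_self : alphaAng nbar nbar = π := by
  rw [alphaAng, div_self (by positivity), sqrt_one, mul_one]

theorem alphaAng_four_mul_add_three : alphaAng nbar (4 * nbar + 3) = 2 * π := by
  have h : (((4 * nbar + 3 : ℕ) : ℝ) + 1) / (nbar + 1) = 2 ^ 2 := by
    field_simp
    push_cast
    ring
  rw [alphaAng, h, sqrt_sq zero_le_two, mul_comm]

theorem cos_alphaAng_sq_lt_one {n : ℕ} (h₁ : nbar < n) (h₂ : n < 4 * nbar + 3) :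
    cos (alphaAng nbar n) ^ 2 < 1 := by
  have hlo : π < alphaAng nbar n := alphaAng_self nbar ▸ alphaAng_strictMono nbar h₁
  have hhi : alphaAng nbar n < 2 * π :=
    alphaAng_four_mul_add_three nbar ▸ alphaAng_strictMono nbar h₂
  have hsin : sin (alphaAng nbar n) < 0 := by
    rw [← sin_sub_two_pi]
    exact sin_neg_of_neg_of_neg_pi_lt (by linarith) (by linarith)
  nlinarith [sin_sq_add_cos_sq (alphaAng nbar n)]

theorem Mer_eq_diagonal (D : ℕ) :
    Mer nbar D = diagonal fun j : Fin D => (cos (alphaAng nbar j) : ℂ) := by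
  ext i j
  by_cases h : i = j
  · subst h; simp [Mer]
  · simp [Mer, h]

theorem conjTranspose_Mgr_mul_Mgr :
    (Mgr nbar (4 * nbar + 4))ᴴ * Mgr nbar (4 * nbar + 4) =
      diagonal fun j : Fin (4 * nbar + 4) => (sin (alphaAng nbar j) : ℂ) ^ 2 := by
  ext i j
  simp only [mul_apply, conjTranspose_apply, Mgr, diagonal_apply]
  by_cases hi : (i : ℕ) + 1 < 4 * nbar + 4
  · rw [Finset.sum_eq_single ⟨i + 1, hi⟩ (fun k _ hk => by simp [Fin.ext_iff.not.mp hk]) (by simp)]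
    by_cases hij : i = j
    · subst hij; simp [sq, -Complex.ofReal_sin]
    · simp [hij, Fin.val_ne_of_ne hij]
  · have hsin : sin (alphaAng nbar i) = 0 := by
      rw [show (i : ℕ) = 4 * nbar + 3 by omega, alphaAng_four_mul_add_three, sin_two_pi]
    refine (Finset.sum_eq_zero fun k _ => ?_).trans (by simp [hsin])
    simp [show (k : ℕ) ≠ i + 1 by omega]

theorem conjTranspose_Mgr_mul_Mgr_add_conjTranspose_Mer_mul_Mer :
    (Mgr nbar (4 * nbar + 4))ᴴ * Mgr nbar (4 * nbar + 4) +
      (Mer nbar (4 * nbar + 4))ᴴ * Mer nbar (4 * nbar + 4) = 1 := by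
  rw [conjTranspose_Mgr_mul_Mgr, Mer_eq_diagonal, diagonal_conjTranspose, diagonal_mul_diagonal,
    diagonal_add, ← diagonal_one]
  congr 1
  ext j
  simp only [Pi.star_apply, Complex.star_def, Complex.conj_ofReal, ← sq]
  exact_mod_cast sin_sq_add_cos_sq _

theorem mapsTo_PhirK_densityMatrices :
    MapsTo (PhirK nbar (4 * nbar + 4)) {ρ | ρ.PosSemidef ∧ ρ.trace = 1}
      {ρ | ρ.PosSemidef ∧ ρ.trace = 1} := fun ρ ⟨hpsd, htr⟩ =>
  ⟨(hpsd.mul_mul_conjTranspose_same _).add (hpsd.mul_mul_conjTranspose_same _),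
    (trace_mul_mul_conjTranspose_add
      (conjTranspose_Mgr_mul_Mgr_add_conjTranspose_Mer_mul_Mer nbar) ρ).trans htr⟩

variable {nbar} {D : ℕ}

theorem Mgr_row_of_eq_succ {a i : Fin D} (h : (a : ℕ) = i + 1) :
    Mgr nbar D a = Pi.single i (sin (alphaAng nbar i) : ℂ) := by
  ext j
  by_cases hj : j = i
  · subst hj; simp [Mgr, h]
  · simp [Mgr, h, hj, Fin.val_ne_of_ne (Ne.symm hj)]

theorem Mgr_row_of_eq_zero {a : Fin D} (h : (a : ℕ) = 0) : Mgr nbar D a = 0 := by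
  ext j
  simp [Mgr, h]

theorem Mer_mul_mul_conjTranspose_apply (ρ : Matrix (Fin D) (Fin D) ℂ) (a b : Fin D) :
    (Mer nbar D * ρ * (Mer nbar D)ᴴ) a b =
      (cos (alphaAng nbar a) : ℂ) * cos (alphaAng nbar b) * ρ a b := by
  rw [Mer_eq_diagonal, diagonal_conjTranspose, mul_diagonal, diagonal_mul, Pi.star_apply,
    Complex.star_def, Complex.conj_ofReal]
  ring

theorem Mgr_mul_mul_conjTranspose_apply_self_of_eq_succ (ρ : Matrix (Fin D) (Fin D) ℂ)
    {a i : Fin D} (h : (a : ℕ) = i + 1) :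
    (Mgr nbar D * ρ * (Mgr nbar D)ᴴ) a a = (sin (alphaAng nbar i) : ℂ) ^ 2 * ρ i i := by
  simp only [mul_apply, conjTranspose_apply, Mgr_row_of_eq_succ h, Pi.single_apply, ite_mul,
    zero_mul, mul_ite, mul_zero, Finset.sum_ite_eq', Finset.mem_univ, if_true, RCLike.star_def,
    apply_ite (starRingEnd ℂ), Complex.conj_ofReal, map_zero]
  ring

theorem Mgr_mul_mul_conjTranspose_apply_self_of_eq_zero (ρ : Matrix (Fin D) (Fin D) ℂ)
    {a : Fin D} (h : (a : ℕ) = 0) : (Mgr nbar D * ρ * (Mgr nbar D)ᴴ) a a = 0 := by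
  simp [mul_apply, Mgr_row_of_eq_zero h]

theorem PhirK_apply_self_of_eq_succ (ρ : Matrix (Fin D) (Fin D) ℂ) {a i : Fin D}
    (h : (a : ℕ) = i + 1) :
    PhirK nbar D ρ a a =
      (cos (alphaAng nbar a) : ℂ) ^ 2 * ρ a a + (sin (alphaAng nbar i) : ℂ) ^ 2 * ρ i i := by
  rw [PhirK, Matrix.add_apply, Mer_mul_mul_conjTranspose_apply,
    Mgr_mul_mul_conjTranspose_apply_self_of_eq_succ ρ h]
  ring

theorem PhirK_apply_self_of_eq_zero (ρ : Matrix (Fin D) (Fin D) ℂ) {a : Fin D}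
    (h : (a : ℕ) = 0) : PhirK nbar D ρ a a = (cos (alphaAng nbar a) : ℂ) ^ 2 * ρ a a := by
  rw [PhirK, Matrix.add_apply, Mer_mul_mul_conjTranspose_apply,
    Mgr_mul_mul_conjTranspose_apply_self_of_eq_zero ρ h]
  ring

theorem mapsTo_PhirK_apply_self_eq_zero :
    MapsTo (PhirK nbar D) {ρ | ∀ a : Fin D, (a : ℕ) ≤ nbar → ρ a a = 0}
      {ρ | ∀ a : Fin D, (a : ℕ) ≤ nbar → ρ a a = 0} := by
  intro ρ hρ a ha
  rcases Nat.eq_zero_or_pos a with h | h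
  · rw [PhirK_apply_self_of_eq_zero ρ h, hρ a ha, mul_zero]
  · rw [PhirK_apply_self_of_eq_succ ρ (i := ⟨a - 1, by omega⟩) (by simp only; omega), hρ a ha,
      hρ _ (by simp only; omega), mul_zero, mul_zero, add_zero]

theorem tendsto_PhirK_iterate_apply_self {ρ₀ : Matrix (Fin D) (Fin D) ℂ}
    (hlow : ∀ a : Fin D, (a : ℕ) ≤ nbar → ρ₀ a a = 0) (a : Fin D)
    (ha : (a : ℕ) < 4 * nbar + 3) :
    Tendsto (fun k => (PhirK nbar D)^[k] ρ₀ a a) atTop (𝓝 0) := by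
  have hconst (a : Fin D) (ha : (a : ℕ) ≤ nbar) :
      Tendsto (fun k => (PhirK nbar D)^[k] ρ₀ a a) atTop (𝓝 0) := by
    simp_rw [mapsTo_PhirK_apply_self_eq_zero.iterate _ hlow a ha]
    exact tendsto_const_nhds
  obtain ⟨n, hn⟩ : ∃ n, (a : ℕ) = n := ⟨_, rfl⟩
  induction n generalizing a with
  | zero => exact hconst a (by omega)
  | succ i ih =>
    by_cases hle : (a : ℕ) ≤ nbar
    · exact hconst a hle
    let i' : Fin D := ⟨i, by omega⟩
    have hforcing := ((ih i' (by simp only [i']; omega) rfl).norm.const_mul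
      (sin (alphaAng nbar i) ^ 2))
    rw [norm_zero, mul_zero] at hforcing
    rw [tendsto_zero_iff_norm_tendsto_zero]
    refine tendsto_zero_of_le_mul_add (sq_nonneg _) (cos_alphaAng_sq_lt_one nbar (by omega) ha)
      (fun k => norm_nonneg _) (fun k => ?_) hforcing
    rw [Function.iterate_succ_apply', PhirK_apply_self_of_eq_succ _ (i := i') hn]
    refine (norm_add_le _ _).trans_eq ?_
    simp only [norm_mul, norm_pow, Complex.norm_real, Real.norm_eq_abs, sq_abs, i']

end Reservoir

/-- on the (4n̄+4)-dimensional truncation, the resonant trapping-state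
reservoir drives every density matrix supported above the trap (levels n̄+1,…,4n̄+3)
entrywise to |4n̄+3⟩⟨4n̄+3|. -/
theorem trapping_state_divergence_above (nbar : ℕ)
    (ρ₀ : Matrix (Fin (4*nbar+4)) (Fin (4*nbar+4)) ℂ)
    (hpsd : ρ₀.PosSemidef) (htr : ρ₀.trace = 1)
    (hsupp : ∀ a b : Fin (4*nbar+4),
      ¬(nbar + 1 ≤ (a : ℕ) ∧ (a : ℕ) ≤ 4*nbar+3 ∧ nbar + 1 ≤ (b : ℕ) ∧ (b : ℕ) ≤ 4*nbar+3) →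
      ρ₀ a b = 0) :
    ∀ a b : Fin (4*nbar+4),
      Filter.Tendsto (fun k => (PhirK nbar (4*nbar+4))^[k] ρ₀ a b) Filter.atTop
        (nhds (Matrix.single (⟨4*nbar+3, by omega⟩ : Fin (4*nbar+4))
          (⟨4*nbar+3, by omega⟩ : Fin (4*nbar+4)) 1 a b)) := by
  have hdensity (k : ℕ) := (mapsTo_PhirK_densityMatrices nbar).iterate k ⟨hpsd, htr⟩
  refine tendsto_single_of_tendsto_apply_self (fun k => (hdensity k).1) (fun k => (hdensity k).2)
    _ fun a ha => tendsto_PhirK_iterate_apply_self (fun c hc => hsupp c c (by omega)) a ?_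
  have : (a : ℕ) ≠ 4 * nbar + 3 := fun h => ha (Fin.ext h)
  omega
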